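/- arXiv:0902.2514 — 3 statements merged into one kernel-verified Lean document; each statement's English description precedes it below -/
import Mathlib

section
/- For every positive integer n and every real number s with 0 ≤ s ≤ 1, the double inequality n^{1-s} ≤ Γ(n+1)/Γ(n+s) ≤ exp((1-s)·ψ(n+1)) holds, where Γ denotes Euler's gamma function and ψ is the digamma function. -/
/-!
Both bounds come from the convexity of `log ∘ Γ` on `(0, ∞)`. Interpolating between `x` and
`x + 1` and using `Γ(x + 1) = x Γ(x)` gives `Γ(x + s) ≤ x ^ s Γ(x)`, which is the lower bound.
The chord of `log ∘ Γ` over `[x + s, x + 1]` has slope at most `ψ(x + 1)`, which is the upper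
bound.
-/

open Real

/-- The digamma (psi) function, the derivative of `log ∘ Γ`. -/
noncomputable def digamma : ℝ → ℝ :=
  deriv fun x : ℝ => Real.log (Real.Gamma x)

theorem differentiableAt_log_Gamma {x : ℝ} (hx : 0 < x) :
    DifferentiableAt ℝ (log ∘ Gamma) x := by
  refine DifferentiableAt.log (differentiableAt_Gamma fun m hm => ?_) (Gamma_pos_of_pos hx).ne'
  have : (0 : ℝ) ≤ m := m.cast_nonneg
  linarith

theorem Gamma_add_le_rpow_mul_Gamma {x s : ℝ} (hx : 0 < x) (hs0 : 0 ≤ s) (hs1 : s ≤ 1) :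
    Gamma (x + s) ≤ x ^ s * Gamma x := by
  have hΓx := Gamma_pos_of_pos hx
  have hconv := convexOn_log_Gamma.2 (Set.mem_Ioi.2 hx) (Set.mem_Ioi.2 (by linarith : 0 < x + 1))
    (sub_nonneg.2 hs1) hs0 (sub_add_cancel 1 s)
  have hmid : (1 - s) • x + s • (x + 1) = x + s := by simp only [smul_eq_mul]; ring
  have hlog : log (Gamma (x + 1)) = log x + log (Gamma x) := by
    rw [Gamma_add_one hx.ne', log_mul hx.ne' hΓx.ne']
  rw [hmid] at hconv
  simp only [Function.comp_apply, smul_eq_mul, hlog] at hconv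
  rw [← log_le_log_iff (Gamma_pos_of_pos (by linarith)) (by positivity),
    log_mul (by positivity) hΓx.ne', log_rpow hx]
  linarith

theorem rpow_one_sub_le_Gamma_add_one_div_Gamma_add {x s : ℝ} (hx : 0 < x) (hs0 : 0 ≤ s)
    (hs1 : s ≤ 1) : x ^ (1 - s) ≤ Gamma (x + 1) / Gamma (x + s) := by
  rw [le_div_iff₀ (Gamma_pos_of_pos (by linarith)), Gamma_add_one hx.ne']
  calc x ^ (1 - s) * Gamma (x + s) ≤ x ^ (1 - s) * (x ^ s * Gamma x) :=
        mul_le_mul_of_nonneg_left (Gamma_add_le_rpow_mul_Gamma hx hs0 hs1) (by positivity)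
    _ = x * Gamma x := by rw [← mul_assoc, ← rpow_add hx, sub_add_cancel, rpow_one]

theorem Gamma_div_Gamma_le_exp_mul_digamma {a b : ℝ} (ha : 0 < a) (hab : a ≤ b) :
    Gamma b / Gamma a ≤ exp ((b - a) * digamma b) := by
  rcases hab.eq_or_lt with rfl | hlt
  · simp [div_self (Gamma_pos_of_pos ha).ne']
  have hb : 0 < b := ha.trans hlt
  have hslope := convexOn_log_Gamma.slope_le_deriv (Set.mem_Ioi.2 ha) (Set.mem_Ioi.2 hb) hlt
    (differentiableAt_log_Gamma hb)
  rw [slope_def_field, div_le_iff₀ (sub_pos.2 hlt)] at hslope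
  rw [← exp_log (div_pos (Gamma_pos_of_pos hb) (Gamma_pos_of_pos ha)), exp_le_exp,
    log_div (Gamma_pos_of_pos hb).ne' (Gamma_pos_of_pos ha).ne', mul_comm]
  exact hslope

theorem gautschi_first_double_inequality (n : ℕ) (hn : 0 < n) (s : ℝ)
    (hs0 : 0 ≤ s) (hs1 : s ≤ 1) :
    (n : ℝ) ^ (1 - s) ≤ Gamma (n + 1) / Gamma (n + s) ∧
      Gamma (n + 1) / Gamma (n + s) ≤ Real.exp ((1 - s) * digamma (n + 1)) := by
  have hn' : (0 : ℝ) < n := Nat.cast_pos.2 hn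
  refine ⟨rpow_one_sub_le_Gamma_add_one_div_Gamma_add hn' hs0 hs1, ?_⟩
  have h := Gamma_div_Gamma_le_exp_mul_digamma (by linarith : (0 : ℝ) < n + s)
    (by linarith : (n : ℝ) + s ≤ n + 1)
  rwa [add_sub_add_left_eq_sub] at h
end

section
/- For every positive integer n, the double inequality 1/√(π(n + (n+1)/(4n+3))) < (2n-1)!!/(2n)!! < 1/√(π(n + 1/4)) holds. -/
/-!
Write `w n = (2n-1)!!/(2n)!!`, so that `w (n+1) = w n * (2n+1)/(2n+2)`. The ratios of consecutive
terms of `w n ^ 2 * (n + 1/4)` and of `w n ^ 2 * (n + (n+1)/(4n+3))` are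
`1 + 1/((2n+2)^2 (4n+1))` and `1 - 1/((2n+2)^2 (4n+7))`, so the first sequence is strictly
increasing and the second strictly decreasing. By Wallis' product `w n ^ 2 * (2n+1) → 2/π`,
hence both tend to `1/π`, which therefore lies strictly between them.
-/

open Real Filter Topology

section StrictMonoLimit

variable {α β : Type*} [TopologicalSpace α] [Preorder α] [OrderClosedTopology α]
  [LinearOrder β] [NoMaxOrder β] {f : β → α} {a : α}

theorem StrictMono.gt_of_tendsto (hf : StrictMono f) (ha : Tendsto f atTop (𝓝 a)) (b : β) :
    f b < a := by
  obtain ⟨c, hbc⟩ := exists_gt b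
  exact (hf hbc).trans_le (hf.monotone.ge_of_tendsto ha c)

theorem StrictAnti.lt_of_tendsto (hf : StrictAnti f) (ha : Tendsto f atTop (𝓝 a)) (b : β) :
    a < f b := by
  obtain ⟨c, hbc⟩ := exists_gt b
  exact (hf.antitone.le_of_tendsto ha c).trans_lt (hf hbc)

end StrictMonoLimit

theorem lt_one_div_sqrt_iff {w x : ℝ} (hw : 0 ≤ w) (hx : 0 < x) :
    w < 1 / √x ↔ w ^ 2 * x < 1 := by
  have h : w * √x = √(w ^ 2 * x) := by rw [sqrt_mul (sq_nonneg w), sqrt_sq hw]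
  rw [lt_div_iff₀ (sqrt_pos.2 hx), h, sqrt_lt' one_pos, one_pow]

theorem one_div_sqrt_lt_iff {w x : ℝ} (hw : 0 ≤ w) (hx : 0 < x) :
    1 / √x < w ↔ 1 < w ^ 2 * x := by
  have h : w * √x = √(w ^ 2 * x) := by rw [sqrt_mul (sq_nonneg w), sqrt_sq hw]
  rw [div_lt_iff₀ (sqrt_pos.2 hx), h, lt_sqrt zero_le_one, one_pow]

/-- `(2n-1)!!/(2n)!!`. -/
noncomputable def wallisRatio (n : ℕ) : ℝ := (2 * n).factorial / (2 ^ n * n.factorial) ^ 2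

theorem wallisRatio_pos (n : ℕ) : 0 < wallisRatio n := by
  unfold wallisRatio; positivity

theorem wallisRatio_succ (n : ℕ) :
    wallisRatio (n + 1) = wallisRatio n * ((2 * n + 1) / (2 * n + 2)) := by
  have h : (2 * (n + 1)).factorial = (2 * n + 2) * ((2 * n + 1) * (2 * n).factorial) := by
    rw [show 2 * (n + 1) = 2 * n + 1 + 1 by ring, Nat.factorial_succ, Nat.factorial_succ]
  simp only [wallisRatio, h, Nat.factorial_succ]
  push_cast
  field_simp
  ring

theorem wallisRatio_sq_mul_eq_inv_W (n : ℕ) :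
    wallisRatio n ^ 2 * (2 * n + 1) = (Wallis.W n)⁻¹ := by
  rw [Wallis.W_eq_factorial_ratio, wallisRatio]
  field_simp
  ring

theorem tendsto_wallisRatio_sq_mul :
    Tendsto (fun n ↦ wallisRatio n ^ 2 * (2 * n + 1)) atTop (𝓝 (2 / π)) := by
  simp_rw [wallisRatio_sq_mul_eq_inv_W, ← inv_div π 2]
  exact Wallis.tendsto_W_nhds_pi_div_two.inv₀ (by positivity)

theorem tendsto_wallisRatio_sq : Tendsto (fun n ↦ wallisRatio n ^ 2) atTop (𝓝 0) := by
  have h := tendsto_wallisRatio_sq_mul.div_atTop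
    (tendsto_atTop_add_const_right _ 1
      (tendsto_natCast_atTop_atTop.const_mul_atTop (two_pos : (0 : ℝ) < 2)))
  refine h.congr fun n ↦ ?_
  field_simp

theorem tendsto_wallisRatio_sq_mul_add {d : ℕ → ℝ} (hd : ∃ C, ∀ n, |d n| ≤ C) :
    Tendsto (fun n ↦ wallisRatio n ^ 2 * (n + d n)) atTop (𝓝 (1 / π)) := by
  obtain ⟨C, hC⟩ := hd
  -- `w² (n + d) = w² (2n + 1) / 2 + w² (d - 1/2)`, and the second term tends to `0`.
  have hbdd : IsBoundedUnder (· ≤ ·) atTop ((‖·‖) ∘ fun n ↦ d n - 1 / 2) :=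
    isBoundedUnder_of ⟨C + 1 / 2, fun n ↦ (abs_sub _ _).trans (by norm_num [hC n])⟩
  have h := (tendsto_wallisRatio_sq_mul.const_mul (1 / 2)).add
    (tendsto_wallisRatio_sq.zero_mul_isBoundedUnder_le hbdd)
  rw [add_zero, one_div_mul_eq_div, div_div_cancel_left' two_ne_zero, one_div] at h
  rw [one_div]
  refine h.congr fun n ↦ ?_
  ring

theorem strictMono_wallisRatio_sq_mul_add_quarter :
    StrictMono (fun n ↦ wallisRatio n ^ 2 * (n + 1 / 4)) := by
  refine strictMono_nat_of_lt_succ fun n ↦ ?_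
  have hn : (0 : ℝ) ≤ n := n.cast_nonneg
  rw [wallisRatio_succ, mul_pow, mul_assoc]
  push_cast
  refine mul_lt_mul_of_pos_left ?_ (pow_pos (wallisRatio_pos n) 2)
  rw [div_pow, div_mul_eq_mul_div, lt_div_iff₀ (by positivity)]
  nlinarith

theorem strictAnti_wallisRatio_sq_mul_add :
    StrictAnti (fun n ↦ wallisRatio n ^ 2 * (n + (n + 1) / (4 * n + 3))) := by
  refine strictAnti_nat_of_succ_lt fun n ↦ ?_
  have hn : (0 : ℝ) ≤ n := n.cast_nonneg
  rw [wallisRatio_succ, mul_pow, mul_assoc]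
  push_cast
  refine mul_lt_mul_of_pos_left ?_ (pow_pos (wallisRatio_pos n) 2)
  rw [← sub_pos]
  field_simp
  ring_nf
  positivity

theorem chu_wallis_inequality_general (n : ℕ) :
    1 / Real.sqrt (π * (n + (n + 1) / (4 * n + 3) : ℝ)) <
        (((2 * n).factorial : ℝ) / ((2 : ℝ) ^ n * n.factorial)) / ((2 : ℝ) ^ n * n.factorial) ∧
      (((2 * n).factorial : ℝ) / ((2 : ℝ) ^ n * n.factorial)) / ((2 : ℝ) ^ n * n.factorial) <
        1 / Real.sqrt (π * (n + 1 / 4)) := by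
  rw [div_div, ← sq, ← wallisRatio]
  have hw := (wallisRatio_pos n).le
  rw [one_div_sqrt_lt_iff hw (by positivity), lt_one_div_sqrt_iff hw (by positivity),
    mul_left_comm, ← div_lt_iff₀' pi_pos, mul_left_comm, ← lt_div_iff₀' pi_pos]
  refine ⟨strictAnti_wallisRatio_sq_mul_add.lt_of_tendsto ?_ n,
    strictMono_wallisRatio_sq_mul_add_quarter.gt_of_tendsto ?_ n⟩
  · refine tendsto_wallisRatio_sq_mul_add ⟨1, fun n ↦ ?_⟩
    rw [abs_of_nonneg (by positivity), div_le_one (by positivity)]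
    linarith [(n.cast_nonneg : (0 : ℝ) ≤ n)]
  · exact tendsto_wallisRatio_sq_mul_add ⟨1 / 4, fun n ↦ by norm_num [abs_of_pos]⟩

/-- For a positive integer `n`, with `(2n)!! = 2^n · n!` and `(2n-1)!! = (2n)!/(2^n · n!)`,
Chu's refinement of Wallis' inequality:
`1/√(π(n+(n+1)/(4n+3))) < (2n-1)!!/(2n)!! < 1/√(π(n+1/4))`. -/
theorem chu_wallis_inequality (n : ℕ) (hn : 0 < n) :
    1 / Real.sqrt (π * (n + (n + 1) / (4 * n + 3) : ℝ)) <
        (((2 * n).factorial : ℝ) / ((2 : ℝ) ^ n * n.factorial)) / ((2 : ℝ) ^ n * n.factorial) ∧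
      (((2 * n).factorial : ℝ) / ((2 : ℝ) ^ n * n.factorial)) / ((2 : ℝ) ^ n * n.factorial) <
        1 / Real.sqrt (π * (n + 1 / 4)) :=
  chu_wallis_inequality_general n
end

section
/- For every integer n ≥ 2, the double inequality √((2n-3)/4) < Γ(n/2)/Γ((n-1)/2) ≤ √((n-1)²/(2n-1)) holds, where Γ denotes Euler's gamma function. -/
/-!
Write `R x = Γ(x + 1/2) / Γ(x)`. Log-convexity of `Γ` at the midpoint of `x` and `x + 1` gives
`R x ^ 2 ≤ x`, and `Γ(x + 1) = x Γ(x)` gives `R x * R (x + 1/2) = x`, hence also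
`x - 1/2 ≤ R x ^ 2`. The recurrence `R (x + 1) = R x (x + 1/2) / x` makes `R x ^ 2 / (x - 1/4)`
strictly decreasing along `x, x + 1, x + 2, …`, while the crude lower bound keeps it above a
quantity tending to `1`; so `x - 1/4 < R x ^ 2`, and, through `R x * R (x + 1/2) = x`,
`R x ^ 2 < x ^ 2 / (x + 1/4)`. For `x = (n - 1)/2` these are the two inequalities.
-/

open Real Filter Topology

noncomputable def gammaRatio (x : ℝ) : ℝ := Gamma (x + 1 / 2) / Gamma x

lemma Gamma_add_half_sq_le {x : ℝ} (hx : 0 < x) :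
    Gamma (x + 1 / 2) ^ 2 ≤ Gamma x * Gamma (x + 1) := by
  have h := Gamma_mul_add_mul_le_rpow_Gamma_mul_rpow_Gamma hx (by linarith : 0 < x + 1)
    one_half_pos one_half_pos (add_halves 1)
  rw [show 1 / 2 * x + 1 / 2 * (x + 1) = x + 1 / 2 by ring, ← mul_rpow (Gamma_pos_of_pos hx).le
    (Gamma_pos_of_pos (by linarith)).le, ← sqrt_eq_rpow] at h
  calc Gamma (x + 1 / 2) ^ 2 ≤ √(Gamma x * Gamma (x + 1)) ^ 2 := by
        gcongr
    _ = Gamma x * Gamma (x + 1) := sq_sqrt (by positivity)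

namespace gammaRatio

variable {x : ℝ}

lemma pos (hx : 0 < x) : 0 < gammaRatio x :=
  div_pos (Gamma_pos_of_pos (by linarith)) (Gamma_pos_of_pos hx)

lemma sq_le (hx : 0 < x) : gammaRatio x ^ 2 ≤ x := by
  have hΓ := Gamma_pos_of_pos hx
  have h := Gamma_add_half_sq_le hx
  rw [Gamma_add_one hx.ne'] at h
  rw [gammaRatio, div_pow, div_le_iff₀ (by positivity)]
  linarith

lemma mul_add_half (hx : 0 < x) : gammaRatio x * gammaRatio (x + 1 / 2) = x := by
  have hΓ := Gamma_pos_of_pos (by linarith : 0 < x + 1 / 2)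
  rw [gammaRatio, gammaRatio, show x + 1 / 2 + 1 / 2 = x + 1 by ring, Gamma_add_one hx.ne']
  field_simp [(Gamma_pos_of_pos hx).ne']

lemma sub_half_le_sq (hx : 1 / 2 < x) : x - 1 / 2 ≤ gammaRatio x ^ 2 := by
  have hy : 0 < x - 1 / 2 := by linarith
  have h := mul_add_half hy
  rw [sub_add_cancel] at h
  have hle := sq_le hy
  have hpos := pos hy
  nlinarith [pos (by linarith : 0 < x)]

lemma add_one (hx : 0 < x) : gammaRatio (x + 1) = gammaRatio x * (x + 1 / 2) / x := by
  rw [gammaRatio, gammaRatio, show x + 1 + 1 / 2 = x + 1 / 2 + 1 by ring,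
    Gamma_add_one (by linarith : x + 1 / 2 ≠ 0), Gamma_add_one hx.ne']
  field_simp [(Gamma_pos_of_pos hx).ne']

lemma sq_div_sub_quarter_add_one_lt (hx : 1 / 4 < x) :
    gammaRatio (x + 1) ^ 2 / (x + 1 - 1 / 4) < gammaRatio x ^ 2 / (x - 1 / 4) := by
  have hx0 : 0 < x := by linarith
  have hR := pos hx0
  rw [add_one hx0, div_lt_div_iff₀ (by linarith) (by linarith), div_pow,
    div_mul_eq_mul_div, div_lt_iff₀ (by positivity)]
  -- `(x + 1/2)² (x - 1/4) = x² (x + 3/4) - 1/16`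
  nlinarith [sq_nonneg (gammaRatio x)]

lemma one_le_sq_div_sub_quarter (hx : 1 / 4 < x) : 1 ≤ gammaRatio x ^ 2 / (x - 1 / 4) := by
  have hanti : Antitone fun k : ℕ => gammaRatio (x + k) ^ 2 / (x + k - 1 / 4) :=
    antitone_nat_of_succ_le fun k => by
      have hk : 1 / 4 < x + k := by linarith [k.cast_nonneg (α := ℝ)]
      simpa [add_assoc] using (sq_div_sub_quarter_add_one_lt hk).le
  have hlim : Tendsto (fun k : ℕ => 1 - 1 / 4 / (x - 1 / 4 + k)) atTop (𝓝 1) := by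
    simpa using (tendsto_const_nhds (x := (1 : ℝ))).sub (tendsto_const_nhds.div_atTop
      (tendsto_atTop_add_const_left _ (x - 1 / 4) tendsto_natCast_atTop_atTop))
  refine le_of_tendsto hlim (eventually_atTop.2 ⟨1, fun k hk => ?_⟩)
  have hk : (1 : ℝ) ≤ k := by exact_mod_cast hk
  calc 1 - 1 / 4 / (x - 1 / 4 + k) = (x + k - 1 / 2) / (x + k - 1 / 4) := by
        rw [one_sub_div (by linarith)]
        congr 1 <;> ring
    _ ≤ gammaRatio (x + k) ^ 2 / (x + k - 1 / 4) := by
        gcongr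
        · linarith
        · exact sub_half_le_sq (by linarith)
    _ ≤ gammaRatio x ^ 2 / (x - 1 / 4) := by simpa using hanti (Nat.zero_le k)

lemma sub_quarter_lt_sq (hx : 1 / 4 < x) : x - 1 / 4 < gammaRatio x ^ 2 := by
  have h := (one_le_sq_div_sub_quarter (x := x + 1) (by linarith)).trans_lt
    (sq_div_sub_quarter_add_one_lt hx)
  rwa [one_lt_div (by linarith)] at h

lemma sq_lt_sq_div_add_quarter (hx : 0 < x) : gammaRatio x ^ 2 < x ^ 2 / (x + 1 / 4) := by
  have h := sub_quarter_lt_sq (x := x + 1 / 2) (by linarith)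
  rw [lt_div_iff₀ (by linarith)]
  calc gammaRatio x ^ 2 * (x + 1 / 4) < gammaRatio x ^ 2 * gammaRatio (x + 1 / 2) ^ 2 := by
        gcongr
        · exact pow_pos (pos hx) 2
        · linarith
    _ = x ^ 2 := by rw [← mul_pow, mul_add_half hx]

end gammaRatio

theorem chu_gamma_ratio_inequality (n : ℕ) (hn : 2 ≤ n) :
    Real.sqrt ((2 * n - 3) / 4 : ℝ) < Gamma (n / 2) / Gamma ((n - 1) / 2) ∧
      Gamma (n / 2) / Gamma ((n - 1) / 2) ≤ Real.sqrt (((n : ℝ) - 1) ^ 2 / (2 * n - 1)) := by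
  have hx : 1 / 4 < ((n : ℝ) - 1) / 2 := by
    have : (2 : ℝ) ≤ n := by exact_mod_cast hn
    linarith
  have hd : 2 * (n : ℝ) - 1 ≠ 0 := by linarith
  rw [show (n : ℝ) / 2 = ((n : ℝ) - 1) / 2 + 1 / 2 by ring, ← gammaRatio,
    show ((2 * n - 3) / 4 : ℝ) = ((n : ℝ) - 1) / 2 - 1 / 4 by ring,
    show ((n : ℝ) - 1) ^ 2 / (2 * n - 1) =
        (((n : ℝ) - 1) / 2) ^ 2 / (((n : ℝ) - 1) / 2 + 1 / 4) by
      rw [div_eq_div_iff hd (by linarith)]; ring]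
  generalize ((n : ℝ) - 1) / 2 = x at hx ⊢
  have hR := gammaRatio.pos (by linarith : 0 < x)
  exact ⟨(sqrt_lt' hR).2 (gammaRatio.sub_quarter_lt_sq hx),
    (le_sqrt' hR).2 (gammaRatio.sq_lt_sq_div_add_quarter (by linarith)).le⟩
end
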